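/- Let X = {x_1,...,x_n} ⊂ ℝ² with centroid M, let x_r ∈ X be farthest from M, let M_r = (1/(n+1))(x_r + Σ_i x_i), and let s* be the minimiser of P(s) = Σ_i ‖s-x_i‖² + max_i ‖s-x_i‖². Then ‖M_r - x_r‖ ≤ ‖s* - x_r‖. -/

import Mathlib

/-!
Each `z ↦ ‖z - c‖²` is 2-strongly convex, so the objective `P`, a sum of `n` of them plus their
maximum, is `2(n+1)`-strongly convex, and at its minimiser `P M ≥ P s + (n+1)‖s - M‖²`.
Evaluating both sides with the parallel-axis identity `∑ ‖s - xᵢ‖² = ∑ ‖M - xᵢ‖² + n‖s - M‖²`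
and `max ‖s - xᵢ‖ ≥ ‖s - x_r‖ ≥ ‖M - x_r‖ - ‖s - M‖` yields `(n+1)‖s - M‖ ≤ ‖M - x_r‖`.
As `M_r - x_r = n/(n+1) (M - x_r)`, the triangle inequality through `M` concludes.
-/

open Filter Topology

section NormedSpace

variable {E : Type*} [NormedAddCommGroup E] [NormedSpace ℝ E] {s : Set E} {x y : E} {f : E → ℝ}
  {φ : ℝ → ℝ}

lemma UniformConvexOn.add_le_of_isMinOn (hf : UniformConvexOn s φ f) (hmin : IsMinOn f s x)
    (hx : x ∈ s) (hy : y ∈ s) : f x + φ ‖x - y‖ ≤ f y := by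
  have hslack : ∀ l ∈ Set.Ioc (0 : ℝ) 1, f x + φ ‖x - y‖ ≤ f y + l * φ ‖x - y‖ := by
    rintro l ⟨hl0, hl1⟩
    have hconv := hf.2 hx hy (sub_nonneg.2 hl1) hl0.le (sub_add_cancel 1 l)
    have hmin' : f x ≤ f _ := hmin (hf.1 hx hy (sub_nonneg.2 hl1) hl0.le (sub_add_cancel 1 l))
    simp only [smul_eq_mul] at hconv
    have h : l * (f x + (1 - l) * φ ‖x - y‖) ≤ l * f y := by linarith
    linarith [le_of_mul_le_mul_left h hl0]
  have hlim : Tendsto (fun l : ℝ => f y + l * φ ‖x - y‖) (𝓝[>] 0) (𝓝 (f y)) := by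
    have : Continuous (fun l : ℝ => f y + l * φ ‖x - y‖) := by fun_prop
    simpa using (this.tendsto 0).mono_left nhdsWithin_le_nhds
  exact ge_of_tendsto hlim (eventually_of_mem (Ioc_mem_nhdsGT zero_lt_one) hslack)

lemma UniformConvexOn.sum {ι : Type*} {t : Finset ι} {φ : ι → ℝ → ℝ} {f : ι → E → ℝ}
    (hs : Convex ℝ s) (hf : ∀ i ∈ t, UniformConvexOn s (φ i) (f i)) :
    UniformConvexOn s (∑ i ∈ t, φ i) (∑ i ∈ t, f i) := by
  refine ⟨hs, fun x hx y hy a b ha hb hab => ?_⟩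
  simp only [Finset.sum_apply, smul_eq_mul, Finset.mul_sum, ← Finset.sum_add_distrib,
    ← Finset.sum_sub_distrib]
  exact Finset.sum_le_sum fun i hi => (hf i hi).2 hx hy ha hb hab

lemma UniformConvexOn.sup' {ι : Type*} {t : Finset ι} (ht : t.Nonempty) {f : ι → E → ℝ}
    (hf : ∀ i ∈ t, UniformConvexOn s φ (f i)) :
    UniformConvexOn s φ (fun z => t.sup' ht fun i => f i z) := by
  obtain ⟨i₀, hi₀⟩ := ht
  refine ⟨(hf i₀ hi₀).1, fun x hx y hy a b ha hb hab => Finset.sup'_le _ _ fun i hi => ?_⟩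
  calc f i (a • x + b • y) ≤ a • f i x + b • f i y - a * b * φ ‖x - y‖ :=
        (hf i hi).2 hx hy ha hb hab
    _ ≤ _ := by
      gcongr
      · exact Finset.le_sup' (fun i => f i x) hi
      · exact Finset.le_sup' (fun i => f i y) hi

end NormedSpace

section InnerProductSpace

variable {E : Type*} [NormedAddCommGroup E] [InnerProductSpace ℝ E]

lemma strongConvexOn_univ_norm_sub_sq (c : E) :
    StrongConvexOn Set.univ 2 fun x => ‖x - c‖ ^ 2 := by
  rw [strongConvexOn_iff_convex]
  have haffine : (fun x : E => ‖x - c‖ ^ 2 - 2 / 2 * ‖x‖ ^ 2) =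
      fun x => (-2 : ℝ) • innerₛₗ ℝ c x + ‖c‖ ^ 2 := by
    ext x
    rw [norm_sub_sq_real, innerₛₗ_apply_apply, real_inner_comm]
    simp only [smul_eq_mul]
    ring
  rw [haffine]
  exact (((-2 : ℝ) • innerₛₗ ℝ c).convexOn convex_univ).add_const _

lemma sum_norm_sub_sq_eq_sum_norm_sub_centroid_sq_add {ι : Type*} [Fintype ι] {x : ι → E}
    {M : E} (hM : M = (Fintype.card ι : ℝ)⁻¹ • ∑ i, x i) (s : E) :
    ∑ i, ‖s - x i‖ ^ 2 = ∑ i, ‖M - x i‖ ^ 2 + Fintype.card ι * ‖s - M‖ ^ 2 := by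
  have hcentre : ∑ i, (M - x i) = 0 := by
    rcases isEmpty_or_nonempty ι with hι | hι
    · simp
    rw [Finset.sum_sub_distrib, Finset.sum_const, Finset.card_univ, ← Nat.cast_smul_eq_nsmul ℝ,
      hM, smul_inv_smul₀ (by positivity), sub_self]
  have hterm : ∀ i,
      ‖s - x i‖ ^ 2 = ‖M - x i‖ ^ 2 + 2 * inner ℝ (M - x i) (s - M) + ‖s - M‖ ^ 2 := by
    intro i
    rw [← norm_add_sq_real]
    congr 2
    abel
  simp only [hterm, Finset.sum_add_distrib, ← Finset.mul_sum, ← sum_inner, hcentre,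
    inner_zero_left, mul_zero, add_zero, Finset.sum_const, Finset.card_univ, nsmul_eq_mul]

end InnerProductSpace

section MinPower

variable {E : Type*} [NormedAddCommGroup E] [InnerProductSpace ℝ E] {ι : Type*} [Fintype ι]
  [Nonempty ι]

def minPower (x : ι → E) (s : E) : ℝ :=
  ∑ i, ‖s - x i‖ ^ 2 + Finset.univ.sup' Finset.univ_nonempty fun i => ‖s - x i‖ ^ 2

lemma strongConvexOn_minPower (x : ι → E) :
    StrongConvexOn Set.univ (2 * (Fintype.card ι + 1)) (minPower x) := by
  have hsum := UniformConvexOn.sum (t := Finset.univ) convex_univ fun i _ =>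
    strongConvexOn_univ_norm_sub_sq (x i)
  have hsup := UniformConvexOn.sup' Finset.univ_nonempty fun i _ =>
    strongConvexOn_univ_norm_sub_sq (x i)
  unfold StrongConvexOn
  convert hsum.add hsup using 2
  · rw [Pi.add_apply, Finset.sum_apply]
    simp only [Finset.sum_const, Finset.card_univ, nsmul_eq_mul]
    ring
  · funext s
    simp only [minPower, Pi.add_apply, Finset.sum_apply]

lemma card_add_one_mul_norm_sub_centroid_le {x : ι → E} {M s : E}
    (hM : M = (Fintype.card ι : ℝ)⁻¹ • ∑ i, x i) (hs : IsMinOn (minPower x) Set.univ s) {r : ι}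
    (hr : ∀ i, ‖M - x i‖ ≤ ‖M - x r‖) :
    (Fintype.card ι + 1) * ‖s - M‖ ≤ ‖M - x r‖ := by
  set n : ℝ := (Fintype.card ι : ℝ)
  have hgain : minPower x s + (n + 1) * ‖s - M‖ ^ 2 ≤ minPower x M := by
    have := (strongConvexOn_minPower x).add_le_of_isMinOn hs (Set.mem_univ s) (Set.mem_univ M)
    linarith
  have hM_val : minPower x M = ∑ i, ‖M - x i‖ ^ 2 + ‖M - x r‖ ^ 2 := by
    rw [minPower, le_antisymm (Finset.sup'_le _ _ fun i _ => by gcongr; exact hr i)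
      (Finset.le_sup' (fun i => ‖M - x i‖ ^ 2) (Finset.mem_univ r))]
  have hs_val : ∑ i, ‖M - x i‖ ^ 2 + n * ‖s - M‖ ^ 2 + ‖s - x r‖ ^ 2 ≤ minPower x s := by
    rw [minPower, sum_norm_sub_sq_eq_sum_norm_sub_centroid_sq_add hM s]
    gcongr
    exact Finset.le_sup' (fun i => ‖s - x i‖ ^ 2) (Finset.mem_univ r)
  have htri : ‖M - x r‖ - ‖s - M‖ ≤ ‖s - x r‖ := by
    simpa [norm_sub_rev M s] using norm_sub_norm_le (M - x r) (M - s)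
  have hu : 0 ≤ ‖s - M‖ := norm_nonneg _
  have hd : 0 ≤ ‖M - x r‖ := norm_nonneg _
  have hn : 0 ≤ n := Nat.cast_nonneg _
  have hfar : ‖s - x r‖ ^ 2 ≤ ‖M - x r‖ ^ 2 - (2 * n + 1) * ‖s - M‖ ^ 2 := by linarith
  have hclose : ‖s - M‖ ≤ ‖M - x r‖ := by nlinarith
  have htri_sq : (‖M - x r‖ - ‖s - M‖) ^ 2 ≤ ‖s - x r‖ ^ 2 := by gcongr
  nlinarith

end MinPower

/-- `‖M_r - x_r‖ ≤ ‖s* - x_r‖`, where `x_r` is farthest from the centroid and `s*` is the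
quadratic min-power centre. -/
theorem Mr_dist_le_sStar_dist
    {n : ℕ} [NeZero n] (x : Fin n → EuclideanSpace ℝ (Fin 2))
    (M : EuclideanSpace ℝ (Fin 2)) (hM : M = (n : ℝ)⁻¹ • ∑ i, x i)
    (r : Fin n) (hr : ∀ i, ‖M - x i‖ ≤ ‖M - x r‖)
    (Mr : EuclideanSpace ℝ (Fin 2)) (hMr : Mr = ((n : ℝ) + 1)⁻¹ • (x r + ∑ i, x i))
    (P : EuclideanSpace ℝ (Fin 2) → ℝ)
    (hP : ∀ s, P s = (∑ i, ‖s - x i‖ ^ 2) +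
      Finset.univ.sup' Finset.univ_nonempty (fun i => ‖s - x i‖ ^ 2))
    (s : EuclideanSpace ℝ (Fin 2)) (hs : ∀ t, P s ≤ P t) :
    ‖Mr - x r‖ ≤ ‖s - x r‖ := by
  have hPmin : P = minPower x := funext hP
  have hnear := card_add_one_mul_norm_sub_centroid_le (by simpa using hM)
    (isMinOn_univ_iff.2 (hPmin ▸ hs)) hr
  rw [Fintype.card_fin] at hnear
  have hMr_eq : Mr - x r = ((n : ℝ) / (n + 1)) • (M - x r) := by
    have hn : (n : ℝ) ≠ 0 := Nat.cast_ne_zero.2 (NeZero.ne n)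
    rw [hMr, hM, smul_sub, smul_smul]
    match_scalars
    · field_simp
      ring
    · field_simp
  calc ‖Mr - x r‖ = (n : ℝ) / (n + 1) * ‖M - x r‖ := by
        rw [hMr_eq, norm_smul, Real.norm_of_nonneg (by positivity)]
    _ ≤ ‖M - x r‖ - ‖M - s‖ := by
        rw [norm_sub_rev M s, div_mul_eq_mul_div, div_le_iff₀ (by positivity)]
        linarith
    _ ≤ ‖s - x r‖ := by simpa using norm_sub_norm_le (M - x r) (M - s)
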